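/- arXiv:2601.07719 — 4 statements merged into one kernel-verified Lean document; each statement's English description precedes it below -/
import Mathlib

section
/- Let O₁, ..., O_M be Hermitian matrices on ℂ^d and ψ ∈ ℂ^d. Define the real M×M matrices S^ψ_{mn} = Re⟨O_mψ, O_nψ⟩ and A^ψ_{mn} = Im⟨O_mψ, O_nψ⟩. If A^ψ is invertible, then S^ψ is invertible. -/
/-!
Since `re ⟪x, y⟫_ℂ` is the real inner product, `S^ψ` is the real Gram matrix of the vectors
`O_m ψ`. If it is singular, these vectors satisfy a nontrivial real relation `∑ c_n • O_n ψ = 0`,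
and then `(A^ψ c)_m = im ⟪O_m ψ, ∑ c_n • O_n ψ⟫ = 0`, so `A^ψ` is singular as well.
-/

open Matrix Complex
open scoped InnerProductSpace

namespace Matrix

variable {ι E : Type*} [NormedAddCommGroup E] [InnerProductSpace ℂ E]

attribute [local instance] InnerProductSpace.complexToReal

lemma gram_real_eq_map_re (u : ι → E) : gram ℝ u = (gram ℂ u).map re := by
  ext m n
  exact real_inner_eq_re_inner ℂ (u m) (u n)

lemma map_im_gram_mulVec [Fintype ι] (u : ι → E) (c : ι → ℝ) :
    (gram ℂ u).map im *ᵥ c = fun m => (⟪u m, ∑ n, c n • u n⟫_ℂ).im := by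
  ext m
  simp only [mulVec, dotProduct, map_apply, gram_apply, inner_sum, im_sum]
  refine Finset.sum_congr rfl fun n _ => ?_
  rw [RCLike.real_smul_eq_coe_smul (K := ℂ), inner_smul_right]
  simp [mul_comm]

theorem isUnit_map_re_gram_of_isUnit_map_im_gram [Fintype ι] [DecidableEq ι] {u : ι → E}
    (hA : IsUnit ((gram ℂ u).map im)) : IsUnit ((gram ℂ u).map re) := by
  rw [isUnit_iff_isUnit_det, isUnit_iff_ne_zero, ← gram_real_eq_map_re,
    det_gram_ne_zero_iff_linearIndependent, Fintype.linearIndependent_iff]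
  intro c hc
  have hAc : (gram ℂ u).map im *ᵥ c = 0 := by
    rw [map_im_gram_mulVec, hc]
    ext
    simp
  exact congrFun (mulVec_injective_iff_isUnit.mpr hA (hAc.trans (mulVec_zero _).symm))

end Matrix

theorem gram_isUnit_of_symplectic_isUnit_general {d M : ℕ}
    (O : Fin M → Matrix (Fin d) (Fin d) ℂ)
    (ψ : Fin d → ℂ)
    (hA : IsUnit (Matrix.of fun m n : Fin M =>
      (star ((O m) *ᵥ ψ) ⬝ᵥ ((O n) *ᵥ ψ)).im)) :
    IsUnit (Matrix.of fun m n : Fin M =>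
      (star ((O m) *ᵥ ψ) ⬝ᵥ ((O n) *ᵥ ψ)).re) := by
  have map_gram (f : ℂ → ℝ) : (gram ℂ fun m => WithLp.toLp 2 (O m *ᵥ ψ)).map f =
      Matrix.of fun m n => f (star (O m *ᵥ ψ) ⬝ᵥ (O n *ᵥ ψ)) := by
    ext m n
    simp [gram_apply, EuclideanSpace.inner_toLp_toLp, dotProduct_comm]
  rw [← map_gram re]
  exact isUnit_map_re_gram_of_isUnit_map_im_gram (map_gram im ▸ hA)

/-- If the antisymmetric matrix `A^ψ_{mn} = Im⟨O_mψ, O_nψ⟩` is invertible,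
then so is the symmetric matrix `S^ψ_{mn} = Re⟨O_mψ, O_nψ⟩`. -/
theorem gram_isUnit_of_symplectic_isUnit {d M : ℕ}
    (O : Fin M → Matrix (Fin d) (Fin d) ℂ) (hO : ∀ m, (O m).IsHermitian)
    (ψ : Fin d → ℂ)
    (hA : IsUnit (Matrix.of fun m n : Fin M =>
      (star ((O m) *ᵥ ψ) ⬝ᵥ ((O n) *ᵥ ψ)).im)) :
    IsUnit (Matrix.of fun m n : Fin M =>
      (star ((O m) *ᵥ ψ) ⬝ᵥ ((O n) *ᵥ ψ)).re) :=
  gram_isUnit_of_symplectic_isUnit_general O ψ hA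
end

section
/- Let O₁, ..., O_M be Hermitian matrices, H Hermitian with nondegenerate ground state Ψ (unit eigenvector for the minimal eigenvalue E₀, with E₁ − E₀ > 0), and suppose the Gram matrix S^Ψ_{mn} = Re⟨O_mΨ, O_nΨ⟩ is invertible. Define the real symmetric matrix K^Ψ_{mn} = ½⟨Ψ, [O_n, [H, O_m]]Ψ⟩. Then K^Ψ is positive semidefinite, and any v ∈ ker K^Ψ satisfies (Σ_m v_m O_m − c)Ψ = 0, where c = ⟨Ψ, Σ_m v_m O_mΨ⟩. -/
open Matrix Complex

private lemma herm_shift {d : ℕ} {A : Matrix (Fin d) (Fin d) ℂ} (hA : A.IsHermitian)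
    (x y : Fin d → ℂ) : star x ⬝ᵥ (A *ᵥ y) = star (A *ᵥ x) ⬝ᵥ y := by
  rw [Matrix.star_mulVec, Matrix.dotProduct_mulVec, hA.eq]

private lemma sum_mulVec' {d M : ℕ} (f : Fin M → Matrix (Fin d) (Fin d) ℂ) (x : Fin d → ℂ) :
    (∑ m, f m) *ᵥ x = ∑ m, f m *ᵥ x := by
  ext j
  simp [Matrix.mulVec, dotProduct, Matrix.sum_apply, Finset.sum_mul]
  rw [Finset.sum_comm]

private lemma dotProduct_sum' {d M : ℕ} (x : Fin d → ℂ) (f : Fin M → Fin d → ℂ) :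
    x ⬝ᵥ (∑ m, f m) = ∑ m, x ⬝ᵥ f m := by
  simp [dotProduct, Finset.sum_apply, Finset.mul_sum]
  rw [Finset.sum_comm]

private lemma sum_dotProduct' {d M : ℕ} (f : Fin M → Fin d → ℂ) (y : Fin d → ℂ) :
    (∑ m, f m) ⬝ᵥ y = ∑ m, f m ⬝ᵥ y := by
  simp [dotProduct, Finset.sum_apply, Finset.sum_mul]
  rw [Finset.sum_comm]

private lemma mulVec_sum' {d M : ℕ} (D : Matrix (Fin d) (Fin d) ℂ) (f : Fin M → Fin d → ℂ) :
    D *ᵥ (∑ m, f m) = ∑ m, D *ᵥ f m := by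
  ext j
  simp [Matrix.mulVec, dotProduct, Finset.sum_apply, Finset.mul_sum]
  rw [Finset.sum_comm]


/-- For a nondegenerate ground state `Ψ` (gap `g > 0`) with invertible Gram
matrix, the matrix `K^Ψ_{mn} = ½⟨Ψ,[O_n,[H,O_m]]Ψ⟩` is positive semidefinite and
every `v` in its kernel satisfies `(Σ v_m O_m − c)Ψ = 0` with `c = ⟨Ψ, Σ v_m O_m Ψ⟩`. -/
theorem K_posSemidef_kernel {d M : ℕ}
    (O : Fin M → Matrix (Fin d) (Fin d) ℂ) (hO : ∀ m, (O m).IsHermitian)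
    (H : Matrix (Fin d) (Fin d) ℂ) (hH : H.IsHermitian)
    (Ψ : Fin d → ℂ) (hΨ : star Ψ ⬝ᵥ Ψ = 1) (E₀ g : ℝ) (hg : 0 < g)
    (heig : H *ᵥ Ψ = (E₀ : ℂ) • Ψ)
    (hgap : ∀ φ : Fin d → ℂ, star Ψ ⬝ᵥ φ = 0 →
      g * (star φ ⬝ᵥ φ).re ≤ (star φ ⬝ᵥ ((H - (E₀ : ℂ) • 1) *ᵥ φ)).re)
    (hS : IsUnit (Matrix.of fun m n : Fin M =>
      (star ((O m) *ᵥ Ψ) ⬝ᵥ ((O n) *ᵥ Ψ)).re)) :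
    let K : Matrix (Fin M) (Fin M) ℝ := Matrix.of fun m n =>
      ((1/2 : ℂ) * (star Ψ ⬝ᵥ
        ((O n * (H * O m - O m * H) - (H * O m - O m * H) * O n) *ᵥ Ψ))).re
    K.PosSemidef ∧
    ∀ v : Fin M → ℝ, K *ᵥ v = 0 →
      (∑ m, (v m : ℂ) • O m) *ᵥ Ψ =
        (star Ψ ⬝ᵥ ((∑ m, (v m : ℂ) • O m) *ᵥ Ψ)) • Ψ := by
  intro K
  set D : Matrix (Fin d) (Fin d) ℂ := H - (E₀ : ℂ) • 1 with hDdef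
  set A : Fin M → Fin d → ℂ := fun m => O m *ᵥ Ψ with hAdef
  have hD : D.IsHermitian := by
    unfold Matrix.IsHermitian
    rw [hDdef, conjTranspose_sub, conjTranspose_smul, hH.eq, conjTranspose_one]
    simp
  have hDΨ : D *ᵥ Ψ = 0 := by
    rw [hDdef, sub_mulVec, heig, smul_mulVec, one_mulVec, sub_self]
  have hDmv : ∀ x, D *ᵥ x = H *ᵥ x - (E₀ : ℂ) • x := by
    intro x
    rw [hDdef, sub_mulVec, smul_mulVec, one_mulVec]
  have hz : ∀ m n, star (A n) ⬝ᵥ (D *ᵥ A m) = star (star (A m) ⬝ᵥ (D *ᵥ A n)) := by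
    intro m n
    rw [herm_shift hD, star_dotProduct]
  have hK : ∀ m n, K m n = (star (A m) ⬝ᵥ (D *ᵥ A n)).re := by
    intro m n
    show ((1/2 : ℂ) * _).re = _
    have h1 : (H * O m - O m * H) *ᵥ Ψ = D *ᵥ A m := by
      rw [sub_mulVec, ← Matrix.mulVec_mulVec, ← Matrix.mulVec_mulVec, heig, mulVec_smul,
        hDmv]
    have e1 : star Ψ ⬝ᵥ ((O n * (H * O m - O m * H)) *ᵥ Ψ) = star (A n) ⬝ᵥ (D *ᵥ A m) := by
      rw [← Matrix.mulVec_mulVec, h1, herm_shift (hO n)]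
    have e2 : star Ψ ⬝ᵥ (((H * O m - O m * H) * O n) *ᵥ Ψ)
        = - (star (A m) ⬝ᵥ (D *ᵥ A n)) := by
      rw [← Matrix.mulVec_mulVec, sub_mulVec, ← Matrix.mulVec_mulVec,
        ← Matrix.mulVec_mulVec, dotProduct_sub, herm_shift hH, heig,
        herm_shift (hO m), herm_shift (hO m), hDmv, dotProduct_sub,
        mulVec_smul, star_smul, smul_dotProduct, dotProduct_smul]
      simp [hAdef, smul_eq_mul]
    rw [sub_mulVec, dotProduct_sub, e1, e2, hz m n, sub_neg_eq_add]
    set w := star (A m) ⬝ᵥ (D *ᵥ A n) with hw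
    rw [Complex.star_def, add_comm, Complex.add_conj]
    simp
  -- quadratic form identity
  have hsum : ∀ v : Fin M → ℝ, (∑ m, (v m : ℂ) • O m) *ᵥ Ψ = ∑ m, (v m : ℂ) • A m := by
    intro v
    rw [sum_mulVec']
    exact Finset.sum_congr rfl fun m _ => smul_mulVec _ _ _
  have hquad : ∀ v : Fin M → ℝ,
      v ⬝ᵥ (K *ᵥ v)
        = (star ((∑ m, (v m : ℂ) • O m) *ᵥ Ψ) ⬝ᵥ
            (D *ᵥ ((∑ m, (v m : ℂ) • O m) *ᵥ Ψ))).re := by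
    intro v
    rw [hsum]
    have expand : star (∑ m, (v m:ℂ) • A m) ⬝ᵥ (D *ᵥ ∑ n, (v n:ℂ) • A n)
        = ∑ m, ∑ n, ((v m * v n : ℝ) : ℂ) * (star (A m) ⬝ᵥ (D *ᵥ A n)) := by
      rw [mulVec_sum', star_sum, sum_dotProduct']
      refine Finset.sum_congr rfl fun m _ => ?_
      rw [dotProduct_sum']
      refine Finset.sum_congr rfl fun n _ => ?_
      rw [mulVec_smul, star_smul, smul_dotProduct, dotProduct_smul]
      simp [smul_eq_mul, Complex.conj_ofReal]
      push_cast
      ring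
    rw [expand, Complex.re_sum]
    rw [show (v ⬝ᵥ (K *ᵥ v)) = ∑ m, ∑ n, v m * v n * K m n from ?_]
    · refine Finset.sum_congr rfl fun m _ => ?_
      rw [Complex.re_sum]
      refine Finset.sum_congr rfl fun n _ => ?_
      rw [hK m n, Complex.re_ofReal_mul]
    · simp [dotProduct, Matrix.mulVec, Finset.mul_sum]
      refine Finset.sum_congr rfl fun m _ => Finset.sum_congr rfl fun n _ => ?_
      ring
  -- the gap bound for the quadratic form
  have hbound : ∀ v : Fin M → ℝ,
      let φ := (∑ m, (v m : ℂ) • O m) *ᵥ Ψ -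
        (star Ψ ⬝ᵥ ((∑ m, (v m : ℂ) • O m) *ᵥ Ψ)) • Ψ
      g * (star φ ⬝ᵥ φ).re ≤ v ⬝ᵥ (K *ᵥ v) := by
    intro v φ
    set V := ∑ m, (v m : ℂ) • O m with hV
    set c := star Ψ ⬝ᵥ (V *ᵥ Ψ) with hc
    have hφ0 : star Ψ ⬝ᵥ φ = 0 := by
      show star Ψ ⬝ᵥ (V *ᵥ Ψ - c • Ψ) = 0
      rw [dotProduct_sub, dotProduct_smul, hΨ, smul_eq_mul, mul_one, ← hc, sub_self]
    have hDφ : D *ᵥ φ = D *ᵥ (V *ᵥ Ψ) := by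
      show D *ᵥ (V *ᵥ Ψ - c • Ψ) = _
      rw [mulVec_sub, mulVec_smul, hDΨ, smul_zero, sub_zero]
    have hre : (star φ ⬝ᵥ (D *ᵥ φ)).re = (star (V *ᵥ Ψ) ⬝ᵥ (D *ᵥ (V *ᵥ Ψ))).re := by
      rw [hDφ]
      show ((star (V *ᵥ Ψ - c • Ψ)) ⬝ᵥ _).re = _
      rw [star_sub, sub_dotProduct, star_smul, smul_dotProduct, herm_shift hD Ψ, hDΨ]
      simp
    have := hgap φ hφ0
    calc g * (star φ ⬝ᵥ φ).re ≤ (star φ ⬝ᵥ (D *ᵥ φ)).re := this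
      _ = v ⬝ᵥ (K *ᵥ v) := by rw [hre, hquad v]
  -- norm facts
  have hre2 : ∀ x : Fin d → ℂ, (star x ⬝ᵥ x).re = ∑ i, Complex.normSq (x i) := by
    intro x
    rw [dotProduct, Complex.re_sum]
    refine Finset.sum_congr rfl fun i _ => ?_
    simp [Complex.mul_re, Complex.normSq_apply]
  have hnn : ∀ x : Fin d → ℂ, 0 ≤ (star x ⬝ᵥ x).re := by
    intro x
    rw [hre2]
    exact Finset.sum_nonneg fun i _ => Complex.normSq_nonneg _
  have hzero : ∀ x : Fin d → ℂ, (star x ⬝ᵥ x).re = 0 → x = 0 := by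
    intro x hx
    rw [hre2] at hx
    have h1 := (Finset.sum_eq_zero_iff_of_nonneg
      (fun i _ => Complex.normSq_nonneg (x i))).mp hx
    funext i
    exact Complex.normSq_eq_zero.mp (h1 i (Finset.mem_univ i))
  refine ⟨posSemidef_iff_dotProduct_mulVec.mpr ⟨?_, ?_⟩, ?_⟩
  · -- Hermitian
    ext m n
    rw [conjTranspose_apply]
    show star (K n m) = K m n
    rw [star_trivial, hK n m, hK m n, hz m n]
    rw [Complex.star_def, Complex.conj_re]
  · -- positive semidefinite quadratic form
    intro x
    show (0:ℝ) ≤ star x ⬝ᵥ (K *ᵥ x)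
    have hsx : star x = x := funext fun i => star_trivial _
    rw [hsx]
    exact le_trans (mul_nonneg hg.le (hnn _)) (hbound x)
  · -- kernel
    intro v hv
    have h0 : v ⬝ᵥ (K *ᵥ v) = 0 := by rw [hv, dotProduct_zero]
    set φ : Fin d → ℂ := (∑ m, (v m : ℂ) • O m) *ᵥ Ψ -
      (star Ψ ⬝ᵥ ((∑ m, (v m : ℂ) • O m) *ᵥ Ψ)) • Ψ with hφdef
    have hb : g * (star φ ⬝ᵥ φ).re ≤ 0 := by
      rw [← h0]; exact hbound v
    have hre0 : (star φ ⬝ᵥ φ).re = 0 := by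
      have := hnn φ
      nlinarith
    have hφ0 : φ = 0 := hzero φ hre0
    exact sub_eq_zero.mp hφ0
end

section
/- Let γ be a Hermitian matrix on ℂ^{2M} and S̃^γ the matrix S̃^γ_{mn} = −½ tr([γ, δ_m][γ, δ_n]) = Σ_{σ,σ'} |γ_{mσ,nσ'}|². Say γ is irreducible if for every nonempty proper subset J ⊂ {1,...,M}, the projection 1_J = Σ_{m∈J} δ_m does not commute with γ. Then γ is irreducible if and only if the kernel of S̃^γ equals the span of the all-ones vector (1,...,1). -/
/-!
For real `v` put `V = ∑ v_m δ_m`. Linearity gives `(S̃ v)_m = -½ Re tr([γ, δ_m][γ, V])` and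
`⟨v, S̃ v⟩ = ½ ‖[γ, V]‖²_HS`, since `[γ, V]` is skew-Hermitian; hence `S̃ v = 0` iff `V` commutes
with `γ`. A site-diagonal matrix `diag(d_m)` commutes with `γ` iff `d_m = d_n` whenever `γ` has a
nonzero entry coupling the sites `m` and `n`. So both sides of the equivalence say that the only
functions on sites invariant along this coupling are the constants: level sets of invariant
functions are invariant subsets, and indicators of invariant subsets are invariant functions.
-/

open Matrix Complex Finset
open scoped ComplexOrder

theorem forall_invariant_exists_eq_const_iff {ι α : Type*} [Fintype ι] [Nontrivial α]
    (R : ι → ι → Prop) :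
    (∀ J : Finset ι, J.Nonempty → J ≠ univ → ¬ ∀ m n, R m n → (m ∈ J ↔ n ∈ J)) ↔
      ∀ v : ι → α, (∀ m n, R m n → v m = v n) → ∃ c, v = fun _ => c := by
  classical
  constructor
  · intro hirr v hv
    rcases isEmpty_or_nonempty ι with hι | ⟨⟨m₀⟩⟩
    · exact ⟨Classical.arbitrary α, funext isEmptyElim⟩
    refine ⟨v m₀, funext fun m => by_contra fun hm => ?_⟩
    refine hirr {k | v k = v m₀} ⟨m₀, by simp⟩ (fun h => hm ?_) fun k l hkl => ?_
    · simpa using eq_univ_iff_forall.1 h m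
    · simp [hv k l hkl]
  · rintro hconst J ⟨m, hm⟩ hJ hclosed
    obtain ⟨n, hn⟩ : ∃ n, n ∉ J := by simpa [eq_univ_iff_forall] using hJ
    obtain ⟨a, b, hab⟩ := exists_pair_ne α
    obtain ⟨c, hc⟩ := hconst (fun k => if k ∈ J then a else b) fun k l hkl => by
      simp [hclosed k l hkl]
    have ha := congrFun hc m
    have hb := congrFun hc n
    simp only [hm, hn, if_true, if_false] at ha hb
    exact hab (ha.trans hb.symm)

section Gram

variable {ι n : Type*} [Fintype ι] [Fintype n]

theorem sum_mul_re_mul_trace_mul (c : ℂ) (A : ι → Matrix n n ℂ) (B : Matrix n n ℂ)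
    (v : ι → ℝ) :
    ∑ k, v k * (c * (A k * B).trace).re = (c * ((∑ k, (v k : ℂ) • A k) * B).trace).re := by
  simp only [sum_mul, trace_sum, mul_sum, re_sum, smul_mul_assoc, trace_smul, smul_eq_mul,
    ← re_ofReal_mul, mul_left_comm _ c]

theorem re_trace_conjTranspose_mul_self_eq_zero_iff {X : Matrix n n ℂ} :
    (Xᴴ * X).trace.re = 0 ↔ X = 0 := by
  have hreal : ((Xᴴ * X).trace.re : ℂ) = (Xᴴ * X).trace := by
    rw [← conj_eq_iff_re, ← star_def, ← trace_conjTranspose, conjTranspose_mul,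
      conjTranspose_conjTranspose]
  rw [← trace_conjTranspose_mul_self_eq_zero_iff, ← hreal, ofReal_eq_zero, ofReal_re]

theorem mulVec_eq_zero_iff_sum_smul_eq_zero (C : ι → Matrix n n ℂ) (hC : ∀ m, (C m)ᴴ = -C m)
    (v : ι → ℝ) :
    (of fun m k => (-(1/2 : ℂ) * (C m * C k).trace).re) *ᵥ v = 0 ↔
      ∑ m, (v m : ℂ) • C m = 0 := by
  set S : Matrix ι ι ℝ := of fun m k => (-(1/2 : ℂ) * (C m * C k).trace).re
  set X := ∑ m, (v m : ℂ) • C m with hX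
  have hrow : ∀ m, (S *ᵥ v) m = (-(1/2 : ℂ) * (X * C m).trace).re := by
    intro m
    simp only [S, X, mulVec, dotProduct, of_apply, ← sum_mul_re_mul_trace_mul,
      mul_comm _ (v _), trace_mul_comm (C m)]
  have hquad : v ⬝ᵥ (S *ᵥ v) = (Xᴴ * X).trace.re / 2 := by
    have hXskew : Xᴴ = -X := by simp [X, conjTranspose_sum, conjTranspose_smul, hC]
    simp_rw [dotProduct, hrow, trace_mul_comm X]
    rw [sum_mul_re_mul_trace_mul, ← hX, hXskew, neg_mul X X, trace_neg]
    simp [div_eq_inv_mul]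
  constructor
  · intro h
    rw [← re_trace_conjTranspose_mul_self_eq_zero_iff]
    linarith [show v ⬝ᵥ (S *ᵥ v) = 0 by simp [h]]
  · intro h
    ext m
    rw [hrow, h]
    simp

end Gram

theorem Finset.sum_smul_mul_sub_mul_smul {ι R A : Type*} [CommSemiring R] [Ring A] [Algebra R A]
    (s : Finset ι) (c : ι → R) (a : A) (b : ι → A) :
    ∑ m ∈ s, c m • (a * b m - b m * a) = a * ∑ m ∈ s, c m • b m - (∑ m ∈ s, c m • b m) * a := by
  simp only [smul_sub, mul_smul_comm, smul_mul_assoc, sum_sub_distrib, mul_sum, sum_mul]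

theorem Matrix.IsHermitian.conjTranspose_commutator {n R : Type*} [Fintype n] [CommRing R]
    [StarRing R] {A B : Matrix n n R} (hA : A.IsHermitian) (hB : B.IsHermitian) :
    (A * B - B * A)ᴴ = -(A * B - B * A) := by
  rw [conjTranspose_sub, conjTranspose_mul, conjTranspose_mul, hA.eq, hB.eq, neg_sub]

theorem diagonal_mul_eq_mul_diagonal_iff {n R : Type*} [Fintype n] [DecidableEq n] [CommRing R]
    [NoZeroDivisors R] (d : n → R) (A : Matrix n n R) :
    diagonal d * A = A * diagonal d ↔ ∀ i j, A i j ≠ 0 → d i = d j := by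
  simp only [← ext_iff, diagonal_mul, mul_diagonal, mul_comm (d _),
    ← sub_eq_zero (b := A _ _ * _), ← mul_sub, mul_eq_zero, sub_eq_zero, or_iff_not_imp_left]

theorem diagonal_fst_mul_eq_mul_diagonal_fst_iff {ι κ R : Type*} [Fintype ι] [Fintype κ]
    [DecidableEq ι] [DecidableEq κ] [CommRing R] [NoZeroDivisors R]
    (d : ι → R) (A : Matrix (ι × κ) (ι × κ) R) :
    diagonal (fun i : ι × κ => d i.1) * A = A * diagonal (fun i : ι × κ => d i.1) ↔
      ∀ m n, (∃ σ τ, A (m, σ) (n, τ) ≠ 0) → d m = d n := by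
  simp only [diagonal_mul_eq_mul_diagonal_iff, Prod.forall, ne_eq, forall_exists_index]
  exact ⟨fun h m n σ τ => h m σ n τ, fun h m σ n τ => h m n σ τ⟩

section Sites

variable {ι κ : Type*} [DecidableEq ι] [DecidableEq κ]

/-- The paper's `δ_m`. -/
def siteProj (R : Type*) [Zero R] [One R] (m : ι) : Matrix (ι × κ) (ι × κ) R :=
  of fun i j => if i = j ∧ i.1 = m then 1 else 0

theorem isHermitian_siteProj {R : Type*} [Semiring R] [StarRing R] (m : ι) :
    (siteProj R m : Matrix (ι × κ) (ι × κ) R).IsHermitian := by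
  ext i j
  by_cases h : i = j
  · simp [siteProj, h, apply_ite star]
  · simp [siteProj, h, Ne.symm h]

variable [Fintype ι]

theorem sum_smul_siteProj {R : Type*} [Semiring R] (f : ι → R) :
    ∑ m, f m • (siteProj R m : Matrix (ι × κ) (ι × κ) R) = diagonal fun i => f i.1 := by
  ext i j
  by_cases h : i = j <;> simp [h, siteProj, Matrix.sum_apply, diagonal]

theorem sum_siteProj {R : Type*} [Semiring R] (J : Finset ι) :
    ∑ m ∈ J, (siteProj R m : Matrix (ι × κ) (ι × κ) R) =
      diagonal fun i => if i.1 ∈ J then 1 else 0 := by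
  refine Eq.trans ?_ (sum_smul_siteProj fun m => if m ∈ J then 1 else 0)
  simp [ite_smul, sum_ite_mem]

theorem sum_siteProj_mul_eq_mul_sum_siteProj_iff [Fintype κ] {R : Type*} [CommRing R]
    [NoZeroDivisors R] [Nontrivial R] (J : Finset ι) (A : Matrix (ι × κ) (ι × κ) R) :
    (∑ m ∈ J, siteProj R m) * A = A * ∑ m ∈ J, siteProj R m ↔
      ∀ m n, (∃ σ τ, A (m, σ) (n, τ) ≠ 0) → (m ∈ J ↔ n ∈ J) := by
  rw [sum_siteProj, diagonal_fst_mul_eq_mul_diagonal_fst_iff (fun m => if m ∈ J then 1 else 0)]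
  refine forall_congr' fun m => forall_congr' fun n => imp_congr_right fun _ => ?_
  split_ifs <;> simp_all

variable [Fintype κ]

/-- The paper's `S̃^γ`. For skew-Hermitian `C_m = [γ, δ_m]`, `-½ tr(C_m C_n) = ½ ⟨C_m, C_n⟩_HS`,
so this is a Gram matrix. -/
noncomputable def commutatorGram (γ : Matrix (ι × κ) (ι × κ) ℂ) : Matrix ι ι ℝ :=
  of fun m n => (-(1/2 : ℂ) * ((γ * siteProj ℂ m - siteProj ℂ m * γ) *
    (γ * siteProj ℂ n - siteProj ℂ n * γ)).trace).re

theorem commutatorGram_mulVec_eq_zero_iff {γ : Matrix (ι × κ) (ι × κ) ℂ} (hγ : γ.IsHermitian)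
    (v : ι → ℝ) :
    commutatorGram γ *ᵥ v = 0 ↔ ∀ m n, (∃ σ τ, γ (m, σ) (n, τ) ≠ 0) → v m = v n := by
  rw [commutatorGram, mulVec_eq_zero_iff_sum_smul_eq_zero _
      fun m => hγ.conjTranspose_commutator (isHermitian_siteProj m),
    sum_smul_mul_sub_mul_smul, sum_smul_siteProj, sub_eq_zero, eq_comm,
    diagonal_fst_mul_eq_mul_diagonal_fst_iff (fun m => (v m : ℂ))]
  simp only [ofReal_inj]

end Sites

/-- Irreducibility criterion: `γ` is irreducible (no nontrivial site subset
projection commutes with it) iff the kernel of `S̃^γ` is exactly the span of the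
all-ones vector. -/
theorem irreducible_iff_kernel_ones {M : ℕ}
    (γ : Matrix (Fin M × Fin 2) (Fin M × Fin 2) ℂ) (hγ : γ.IsHermitian) :
    let δ : Fin M → Matrix (Fin M × Fin 2) (Fin M × Fin 2) ℂ :=
      fun m => Matrix.of fun i j => if i = j ∧ i.1 = m then 1 else 0
    let S : Matrix (Fin M) (Fin M) ℝ :=
      Matrix.of fun m n =>
        (-(1/2 : ℂ) * ((γ * δ m - δ m * γ) * (γ * δ n - δ n * γ)).trace).re
    ((∀ J : Finset (Fin M), J.Nonempty → J ≠ Finset.univ →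
        (∑ m ∈ J, δ m) * γ ≠ γ * (∑ m ∈ J, δ m)) ↔
      {v : Fin M → ℝ | S *ᵥ v = 0} = {v : Fin M → ℝ | ∃ c : ℝ, v = fun _ => c}) := by
  intro δ S
  have hcomm : ∀ J : Finset (Fin M), (∑ m ∈ J, δ m) * γ = γ * ∑ m ∈ J, δ m ↔
      ∀ m n, (∃ σ τ, γ (m, σ) (n, τ) ≠ 0) → (m ∈ J ↔ n ∈ J) :=
    fun J => sum_siteProj_mul_eq_mul_sum_siteProj_iff J γ
  have hker : ∀ v, S *ᵥ v = 0 ↔ ∀ m n, (∃ σ τ, γ (m, σ) (n, τ) ≠ 0) → v m = v n :=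
    commutatorGram_mulVec_eq_zero_iff hγ
  have hconst : {v : Fin M → ℝ | ∃ c : ℝ, v = fun _ => c} ⊆ {v | S *ᵥ v = 0} := by
    rintro v ⟨c, rfl⟩
    exact (hker _).2 fun _ _ _ => rfl
  rw [Set.Subset.antisymm_iff, and_iff_left hconst]
  simp only [hcomm, ne_eq, Set.subset_def, Set.mem_ofPred_eq, hker]
  exact forall_invariant_exists_eq_const_iff _
end

section
/- Let O₁, ..., O_M be Hermitian matrices on ℂ^d, H(t) Hermitian and continuous in t, ψ₀ a unit vector with ⟨ψ₀, O_mψ₀⟩ = o_m(0), and suppose the Gram matrix S^{ψ₀}_{mn} = Re⟨O_mψ₀, O_nψ₀⟩ is invertible. Suppose identity ∈ span_ℝ(O₁,...,O_M). Then there exists T' > 0 and unique continuous real functions w₁, ..., w_M on [0,T') such that the solution of i∂ₜψ = (H(t) + i Σ_m w_m(t) O_m)ψ, ψ(0) = ψ₀, satisfies ⟨ψ(t), O_mψ(t)⟩ = o_m(t) for all m and t ∈ [0,T'), with S^{ψ(t)} invertible throughout. Moreover the w_m(t) are determined by the linear system 2 Σ_n S^{ψ(t)}_{mn} w_n(t)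 = o_m'(t) − ⟨ψ(t), i[H(t), O_m]ψ(t)⟩. -/
open Matrix Complex


noncomputable section
namespace GPaux

variable {d M : ℕ}

abbrev Q (d M : ℕ) := ((Fin d → Fin d → ℂ) × (Fin M → ℝ)) × (Fin d → ℂ)

variable (O : Fin M → Matrix (Fin d) (Fin d) ℂ)

/-- Gram matrix. -/
def gram (x : Fin d → ℂ) : Matrix (Fin M) (Fin M) ℝ :=
  Matrix.of fun m n => (star (O m *ᵥ x) ⬝ᵥ (O n *ᵥ x)).re

def bev (h : Fin d → Fin d → ℂ) (x : Fin d → ℂ) (m : Fin M) : ℝ :=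
  (star x ⬝ᵥ ((Complex.I • (Matrix.of h * O m - O m * Matrix.of h)) *ᵥ x)).re

def wf (q : Q d M) : Fin M → ℝ :=
  (2:ℝ)⁻¹ • ((gram O q.2)⁻¹ *ᵥ (q.1.2 - fun m => bev O q.1.1 q.2 m))

def fld (q : Q d M) : Fin d → ℂ :=
  (-Complex.I) • (Matrix.of q.1.1 *ᵥ q.2) + ∑ m, (wf O q m : ℂ) • (O m *ᵥ q.2)

def Om (O : Fin M → Matrix (Fin d) (Fin d) ℂ) : Set (Q d M) := {q | IsUnit (gram O q.2).det}

-- basic smoothness helpers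
lemma contDiff_eval {ι α : Type*} [Fintype ι] [NormedAddCommGroup α] [NormedSpace ℝ α] (i : ι) :
    ContDiff ℝ (⊤ : ℕ∞) (fun f : ι → α => f i) := (ContinuousLinearMap.proj (R := ℝ) (φ := fun _ : ι => α) i).contDiff

lemma contDiff_conj : ContDiff ℝ (⊤ : ℕ∞) (fun z : ℂ => (starRingEnd ℂ) z) :=
  Complex.conjCLE.toContinuousLinearMap.contDiff

lemma contDiff_mulVec_entry (i : Fin d) {E : Type*} [NormedAddCommGroup E]
    [NormedSpace ℝ E] {f : E → Fin d → ℂ} (hf : ContDiff ℝ (⊤ : ℕ∞) f)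
    (A : Matrix (Fin d) (Fin d) ℂ) :
    ContDiff ℝ (⊤ : ℕ∞) (fun e => (A *ᵥ f e) i) := by
  simp only [Matrix.mulVec, dotProduct]
  exact ContDiff.sum fun j _ => contDiff_const.mul ((contDiff_eval j).comp hf)

lemma contDiff_gram_entry (m n : Fin M) :
    ContDiff ℝ (⊤ : ℕ∞) (fun x : Fin d → ℂ => gram O x m n) := by
  have h : ContDiff ℝ (⊤ : ℕ∞) (fun x : Fin d → ℂ => star (O m *ᵥ x) ⬝ᵥ (O n *ᵥ x)) := by
    simp only [dotProduct, Pi.star_apply]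
    exact ContDiff.sum fun i _ => (contDiff_conj.comp
      (contDiff_mulVec_entry i contDiff_id (O m))).mul
      (contDiff_mulVec_entry i contDiff_id (O n))
  exact Complex.reCLM.contDiff.comp h

lemma contDiff_det {ι E : Type*} [Fintype ι] [DecidableEq ι] [NormedAddCommGroup E]
    [NormedSpace ℝ E] {A : E → Matrix ι ι ℝ}
    (hA : ∀ i j, ContDiff ℝ (⊤ : ℕ∞) fun e => A e i j) :
    ContDiff ℝ (⊤ : ℕ∞) (fun e => (A e).det) := by
  simp only [Matrix.det_apply']
  refine ContDiff.sum fun s _ => ?_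
  exact contDiff_const.mul (contDiff_prod fun i _ => hA (s i) i)


variable {E' : Type*} [NormedAddCommGroup E'] [NormedSpace ℝ E']

lemma contDiff_dot {f g : E' → Fin d → ℂ} (hf : ∀ i, ContDiff ℝ (⊤ : ℕ∞) (fun e => f e i))
    (hg : ∀ i, ContDiff ℝ (⊤ : ℕ∞) (fun e => g e i)) :
    ContDiff ℝ (⊤ : ℕ∞) (fun e => f e ⬝ᵥ g e) := by
  simp only [dotProduct]
  exact ContDiff.sum fun i _ => (hf i).mul (hg i)

lemma contDiff_mulVec' {A : E' → Matrix (Fin d) (Fin d) ℂ} {v : E' → Fin d → ℂ}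
    (hA : ∀ i j, ContDiff ℝ (⊤ : ℕ∞) (fun e => A e i j)) (hv : ∀ j, ContDiff ℝ (⊤ : ℕ∞) (fun e => v e j))
    (i : Fin d) : ContDiff ℝ (⊤ : ℕ∞) (fun e => (A e *ᵥ v e) i) := by
  simp only [Matrix.mulVec, dotProduct]
  exact ContDiff.sum fun j _ => (hA i j).mul (hv j)

lemma contDiff_q2 (i : Fin d) : ContDiff ℝ (⊤ : ℕ∞) (fun q : Q d M => q.2 i) :=
  (contDiff_eval i).comp contDiff_snd

lemma contDiff_h (i j : Fin d) : ContDiff ℝ (⊤ : ℕ∞) (fun q : Q d M => q.1.1 i j) :=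
  (contDiff_eval j).comp ((contDiff_eval i).comp (contDiff_fst.comp contDiff_fst))

lemma contDiff_r (m : Fin M) : ContDiff ℝ (⊤ : ℕ∞) (fun q : Q d M => q.1.2 m) :=
  (contDiff_eval m).comp (contDiff_snd.comp contDiff_fst)

lemma contDiff_bev (m : Fin M) :
    ContDiff ℝ (⊤ : ℕ∞) (fun q : Q d M => bev O q.1.1 q.2 m) := by
  unfold bev
  refine Complex.reCLM.contDiff.comp ?_
  refine contDiff_dot (fun i => ?_) ?_
  · exact contDiff_conj.comp (contDiff_q2 i)
  · intro i
    refine contDiff_mulVec' (fun i j => ?_) (fun j => contDiff_q2 j) i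
    simp only [Matrix.smul_apply, Matrix.sub_apply, Matrix.mul_apply, Matrix.of_apply,
      smul_eq_mul]
    refine contDiff_const.mul (ContDiff.sub ?_ ?_)
    · exact ContDiff.sum fun k _ => (contDiff_h i k).mul contDiff_const
    · exact ContDiff.sum fun k _ => contDiff_const.mul (contDiff_h k j)

lemma contDiff_gram_det :
    ContDiff ℝ (⊤ : ℕ∞) (fun q : Q d M => (gram O q.2).det) :=
  (contDiff_det (fun i j => contDiff_gram_entry O i j)).comp contDiff_snd

lemma isOpen_Om : IsOpen (Om O : Set (Q d M)) := by
  have : (Om O : Set (Q d M)) = (fun q : Q d M => (gram O q.2).det) ⁻¹' ({0}ᶜ) := by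
    ext q; simp [Om, isUnit_iff_ne_zero]
  rw [this]
  exact (isOpen_compl_singleton).preimage (contDiff_gram_det O).continuous

lemma contDiffOn_inv_entry (n k : Fin M) :
    ContDiffOn ℝ (⊤ : ℕ∞) (fun q : Q d M => (gram O q.2)⁻¹ n k) (Om O) := by
  have hinv : ∀ q : Q d M, (gram O q.2)⁻¹ n k
      = ((gram O q.2).det)⁻¹ * (gram O q.2).adjugate n k := by
    intro q
    rw [Matrix.inv_def, Ring.inverse_eq_inv']
    simp [Matrix.smul_apply, smul_eq_mul]
  refine ContDiffOn.congr ?_ (fun q _ => hinv q)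
  refine ContDiffOn.mul ?_ ?_
  · refine ContDiffOn.inv ((contDiff_gram_det O).contDiffOn) ?_
    intro q hq; exact isUnit_iff_ne_zero.mp hq
  · have : ∀ q : Q d M, (gram O q.2).adjugate n k
        = ((gram O q.2).updateRow k (Pi.single n 1)).det := fun q =>
      Matrix.adjugate_apply _ _ _
    refine ContDiffOn.congr (ContDiff.contDiffOn ?_) (fun q _ => this q)
    refine contDiff_det (fun i j => ?_)
    rcases eq_or_ne i k with rfl | hik
    · simp only [Matrix.updateRow_self]
      exact contDiff_const
    · simp only [Matrix.updateRow_ne hik]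
      exact (contDiff_gram_entry O i j).comp contDiff_snd

lemma contDiffOn_wf (m : Fin M) :
    ContDiffOn ℝ (⊤ : ℕ∞) (fun q : Q d M => wf O q m) (Om O) := by
  unfold wf
  simp only [Pi.smul_apply, smul_eq_mul, Matrix.mulVec, dotProduct, Pi.sub_apply]
  refine ContDiffOn.mul contDiffOn_const ?_
  refine ContDiffOn.sum fun k _ => ContDiffOn.mul (contDiffOn_inv_entry O m k) ?_
  exact ContDiffOn.sub ((contDiff_r k).contDiffOn) ((contDiff_bev O k).contDiffOn)

lemma contDiffOn_fld : ContDiffOn ℝ (⊤ : ℕ∞) (fld O) (Om O) := by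
  rw [contDiffOn_pi]
  intro i
  unfold fld
  simp only [Pi.add_apply, Pi.smul_apply, Finset.sum_apply, smul_eq_mul]
  refine ContDiffOn.add ?_ ?_
  · refine ContDiffOn.mul contDiffOn_const ?_
    exact ContDiff.contDiffOn (contDiff_mulVec' (fun i j => contDiff_h i j)
      (fun j => contDiff_q2 j) i)
  · refine ContDiffOn.sum fun m _ => ContDiffOn.mul ?_ ?_
    · exact Complex.ofRealCLM.contDiff.comp_contDiffOn (contDiffOn_wf O m)
    · exact ContDiff.contDiffOn (contDiff_mulVec' (A := fun _ => O m) (fun i j => contDiff_const)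
        (fun j => contDiff_q2 j) i)

section algebra

lemma herm_dot {A : Matrix (Fin d) (Fin d) ℂ} (hA : A.IsHermitian) (x y : Fin d → ℂ) :
    star (A *ᵥ x) ⬝ᵥ y = star x ⬝ᵥ (A *ᵥ y) := by
  rw [Matrix.star_mulVec, ← dotProduct_mulVec, hA.eq]

lemma dot_star_comm (u v : Fin d → ℂ) :
    star u ⬝ᵥ v = (starRingEnd ℂ) (star v ⬝ᵥ u) := by
  simp only [dotProduct, Pi.star_apply, map_sum, _root_.map_mul, RingHom.coe_coe]
  simp [mul_comm, Complex.conj_conj]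

lemma herm_dot_real {A : Matrix (Fin d) (Fin d) ℂ} (hA : A.IsHermitian) (x : Fin d → ℂ) :
    star x ⬝ᵥ (A *ᵥ x) = ((star x ⬝ᵥ (A *ᵥ x)).re : ℂ) := by
  have h : (starRingEnd ℂ) (star x ⬝ᵥ (A *ᵥ x)) = star x ⬝ᵥ (A *ᵥ x) := by
    rw [← dot_star_comm, herm_dot hA]
  exact (Complex.conj_eq_iff_re.mp h).symm

lemma comm_herm {A B : Matrix (Fin d) (Fin d) ℂ} (hA : A.IsHermitian) (hB : B.IsHermitian) :
    (Complex.I • (A * B - B * A)).IsHermitian := by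
  unfold Matrix.IsHermitian
  rw [Matrix.conjTranspose_smul, Matrix.conjTranspose_sub, Matrix.conjTranspose_mul,
    Matrix.conjTranspose_mul, hA.eq, hB.eq]
  simp only [Complex.star_def, Complex.conj_I, neg_smul, smul_sub]
  abel

lemma gram_wf (q : Q d M) (hq : IsUnit (gram O q.2)) (m : Fin M) :
    2 * ∑ n, gram O q.2 m n * wf O q n = q.1.2 m - bev O q.1.1 q.2 m := by
  have hdet : IsUnit (gram O q.2).det := (Matrix.isUnit_iff_isUnit_det _).mp hq
  have h1 : gram O q.2 *ᵥ wf O q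
      = (2:ℝ)⁻¹ • (q.1.2 - fun m => bev O q.1.1 q.2 m) := by
    unfold wf
    rw [Matrix.mulVec_smul, Matrix.mulVec_mulVec, Matrix.mul_nonsing_inv _ hdet,
      Matrix.one_mulVec]
  have h2 := congrFun h1 m
  simp only [Matrix.mulVec, dotProduct] at h2
  rw [h2]
  simp only [Pi.smul_apply, Pi.sub_apply, smul_eq_mul]
  ring

lemma hsum {A : Matrix (Fin d) (Fin d) ℂ} {v : Fin M → Fin d → ℂ} :
    A *ᵥ (∑ n, v n) = ∑ n, A *ᵥ v n := by
  ext i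
  simp only [Matrix.mulVec, dotProduct, Finset.sum_apply, Finset.mul_sum]
  exact Finset.sum_comm

lemma dot_sum' {u : Fin d → ℂ} {v : Fin M → Fin d → ℂ} :
    u ⬝ᵥ (∑ n, v n) = ∑ n, u ⬝ᵥ v n := by
  simp only [dotProduct, Finset.sum_apply, Finset.mul_sum]
  exact Finset.sum_comm

lemma sum_dot' {v : Fin M → Fin d → ℂ} {w : Fin d → ℂ} :
    (∑ n, v n) ⬝ᵥ w = ∑ n, v n ⬝ᵥ w := by
  simp only [dotProduct, Finset.sum_apply, Finset.sum_mul]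
  exact Finset.sum_comm

/-- Key algebraic identity: the time derivative of the constraint. -/
lemma constraint_deriv_eq {h : Matrix (Fin d) (Fin d) ℂ} (hh : h.IsHermitian)
    (hO : ∀ m, (O m).IsHermitian) (x : Fin d → ℂ) (c : Fin M → ℝ) (m : Fin M) :
    star ((-Complex.I) • (h *ᵥ x) + ∑ n, (c n : ℂ) • (O n *ᵥ x)) ⬝ᵥ (O m *ᵥ x)
      + star x ⬝ᵥ (O m *ᵥ ((-Complex.I) • (h *ᵥ x) + ∑ n, (c n : ℂ) • (O n *ᵥ x)))
    = (((star x ⬝ᵥ ((Complex.I • (h * O m - O m * h)) *ᵥ x)).re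
        + 2 * ∑ n, (star (O m *ᵥ x) ⬝ᵥ (O n *ᵥ x)).re * c n : ℝ) : ℂ) := by
  have hO' := fun n => (hO n).eq
  -- expand
  have e1 : star ((-Complex.I) • (h *ᵥ x) + ∑ n, (c n : ℂ) • (O n *ᵥ x)) ⬝ᵥ (O m *ᵥ x)
      = Complex.I * (star x ⬝ᵥ (h *ᵥ (O m *ᵥ x)))
        + ∑ n, (c n : ℂ) * (star (O n *ᵥ x) ⬝ᵥ (O m *ᵥ x)) := by
    rw [star_add, add_dotProduct, star_smul, smul_dotProduct, star_sum, sum_dot']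
    rw [Finset.sum_congr rfl (fun n _ => show star ((c n : ℂ) • (O n *ᵥ x)) ⬝ᵥ (O m *ᵥ x)
      = (c n : ℂ) * (star (O n *ᵥ x) ⬝ᵥ (O m *ᵥ x)) from by
        rw [star_smul, smul_dotProduct]
        simp [Complex.star_def, Complex.conj_ofReal, smul_eq_mul])]
    rw [herm_dot hh]
    simp [Complex.star_def, Complex.conj_I, smul_eq_mul]
  have e2 : star x ⬝ᵥ (O m *ᵥ ((-Complex.I) • (h *ᵥ x) + ∑ n, (c n : ℂ) • (O n *ᵥ x)))
      = -Complex.I * (star x ⬝ᵥ (O m *ᵥ (h *ᵥ x)))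
        + ∑ n, (c n : ℂ) * (star (O m *ᵥ x) ⬝ᵥ (O n *ᵥ x)) := by
    rw [Matrix.mulVec_add, dotProduct_add, Matrix.mulVec_smul,
      dotProduct_smul, hsum, dot_sum']
    rw [Finset.sum_congr rfl (fun n _ => show star x ⬝ᵥ (O m *ᵥ ((c n : ℂ) • (O n *ᵥ x)))
      = (c n : ℂ) * (star (O m *ᵥ x) ⬝ᵥ (O n *ᵥ x)) from by
        rw [Matrix.mulVec_smul, dotProduct_smul, herm_dot (hO m)]
        simp [smul_eq_mul])]
    simp [smul_eq_mul]
  rw [e1, e2]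
  have key1 : Complex.I * (star x ⬝ᵥ (h *ᵥ (O m *ᵥ x)))
      + -Complex.I * (star x ⬝ᵥ (O m *ᵥ (h *ᵥ x)))
      = star x ⬝ᵥ ((Complex.I • (h * O m - O m * h)) *ᵥ x) := by
    rw [Matrix.smul_mulVec, dotProduct_smul, Matrix.sub_mulVec,
      dotProduct_sub, ← Matrix.mulVec_mulVec, ← Matrix.mulVec_mulVec]
    simp only [smul_eq_mul]
    ring
  have key2 : ∀ n, (c n : ℂ) * (star (O n *ᵥ x) ⬝ᵥ (O m *ᵥ x))
      + (c n : ℂ) * (star (O m *ᵥ x) ⬝ᵥ (O n *ᵥ x))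
      = ((2 * (star (O m *ᵥ x) ⬝ᵥ (O n *ᵥ x)).re * c n : ℝ) : ℂ) := by
    intro n
    rw [dot_star_comm]
    have : (starRingEnd ℂ) (star (O m *ᵥ x) ⬝ᵥ (O n *ᵥ x))
        + (star (O m *ᵥ x) ⬝ᵥ (O n *ᵥ x))
        = ((2 * (star (O m *ᵥ x) ⬝ᵥ (O n *ᵥ x)).re : ℝ) : ℂ) := by
      rw [add_comm, Complex.add_conj]
    calc (c n : ℂ) * _ + (c n : ℂ) * _
        = (c n : ℂ) * ((starRingEnd ℂ) (star (O m *ᵥ x) ⬝ᵥ (O n *ᵥ x))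
            + (star (O m *ᵥ x) ⬝ᵥ (O n *ᵥ x))) := by ring
      _ = _ := by rw [this]; push_cast; ring_nf
  have hre := herm_dot_real (comm_herm hh (hO m)) x
  push_cast
  rw [← hre]
  calc Complex.I * (star x ⬝ᵥ (h *ᵥ (O m *ᵥ x)))
        + ∑ n, (c n : ℂ) * (star (O n *ᵥ x) ⬝ᵥ (O m *ᵥ x))
        + (-Complex.I * (star x ⬝ᵥ (O m *ᵥ (h *ᵥ x)))
          + ∑ n, (c n : ℂ) * (star (O m *ᵥ x) ⬝ᵥ (O n *ᵥ x)))
      = (Complex.I * (star x ⬝ᵥ (h *ᵥ (O m *ᵥ x)))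
          + -Complex.I * (star x ⬝ᵥ (O m *ᵥ (h *ᵥ x))))
        + ∑ n, ((c n : ℂ) * (star (O n *ᵥ x) ⬝ᵥ (O m *ᵥ x))
          + (c n : ℂ) * (star (O m *ᵥ x) ⬝ᵥ (O n *ᵥ x))) := by
        rw [Finset.sum_add_distrib]; ring
    _ = star x ⬝ᵥ ((Complex.I • (h * O m - O m * h)) *ᵥ x)
        + ∑ n, ((2 * (star (O m *ᵥ x) ⬝ᵥ (O n *ᵥ x)).re * c n : ℝ) : ℂ) := by
        rw [key1, Finset.sum_congr rfl (fun n _ => key2 n)]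
    _ = _ := by
        push_cast
        rw [Finset.mul_sum]
        congr 1
        exact Finset.sum_congr rfl fun n _ => by ring

/-- Derivative of the quadratic constraint along a differentiable curve. -/
lemma hasDerivAt_constraint (A : Matrix (Fin d) (Fin d) ℂ) {ψ : ℝ → Fin d → ℂ}
    {v : Fin d → ℂ} {t : ℝ} (hψ : HasDerivAt ψ v t) :
    HasDerivAt (fun s => star (ψ s) ⬝ᵥ (A *ᵥ ψ s))
      (star v ⬝ᵥ (A *ᵥ ψ t) + star (ψ t) ⬝ᵥ (A *ᵥ v)) t := by
  have hcoord : ∀ i, HasDerivAt (fun s => ψ s i) (v i) t := fun i =>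
    (ContinuousLinearMap.proj (R := ℝ) (φ := fun _ : Fin d => ℂ) i).hasFDerivAt.comp_hasDerivAt
      t hψ
  have hmv : ∀ i, HasDerivAt (fun s => (A *ᵥ ψ s) i) ((A *ᵥ v) i) t := by
    intro i
    simp only [Matrix.mulVec, dotProduct]
    exact HasDerivAt.fun_sum fun j _ => (hcoord j).const_mul (A i j)
  have hterm : ∀ i, HasDerivAt (fun s => star (ψ s i) * (A *ᵥ ψ s) i)
      (star (v i) * (A *ᵥ ψ t) i + star (ψ t i) * (A *ᵥ v) i) t := by
    intro i
    exact ((hcoord i).star.mul (hmv i))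
  have hsum' : HasDerivAt (fun s => ∑ i, star (ψ s i) * (A *ᵥ ψ s) i)
      (∑ i, (star (v i) * (A *ᵥ ψ t) i + star (ψ t i) * (A *ᵥ v) i)) t :=
    HasDerivAt.fun_sum fun i _ => hterm i
  have heq : (fun s => star (ψ s) ⬝ᵥ (A *ᵥ ψ s))
      = fun s => ∑ i, star (ψ s i) * (A *ᵥ ψ s) i := by
    funext s; simp [dotProduct]
  rw [heq]
  convert hsum' using 1
  simp [dotProduct, Finset.sum_add_distrib]

end algebra

section analysis

open Metric Set

/-- Uniform Lipschitz constant and bound for slices of a `C¹` function on a compact set. -/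
lemma slice_lipschitz_bound {P E F : Type*} [NormedAddCommGroup P] [NormedSpace ℝ P]
    [NormedAddCommGroup E] [NormedSpace ℝ E] [ProperSpace E]
    [NormedAddCommGroup F] [NormedSpace ℝ F]
    {G : P × E → F} {Ω : Set (P × E)} (hΩ : IsOpen Ω) (hG : ContDiffOn ℝ 1 G Ω)
    {K : Set P} (hK : IsCompact K) {x₀ : E} {ρ : ℝ}
    (hsub : K ×ˢ closedBall x₀ ρ ⊆ Ω) :
    ∃ (L : NNReal) (C : ℝ), 0 ≤ C ∧ ∀ p ∈ K,
      LipschitzOnWith L (fun x => G (p, x)) (closedBall x₀ ρ) ∧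
      ∀ x ∈ closedBall x₀ ρ, ‖G (p, x)‖ ≤ C := by
  have hKball : IsCompact (K ×ˢ closedBall x₀ ρ) := hK.prod (isCompact_closedBall _ _)
  have hd : ∀ q ∈ Ω, DifferentiableAt ℝ G q := fun q hq =>
    ((hG.differentiableOn one_ne_zero) q hq).differentiableAt (hΩ.mem_nhds hq)
  have hfc : ContinuousOn (fderiv ℝ G) Ω := hG.continuousOn_fderiv_of_isOpen hΩ le_rfl
  have hfc' : ContinuousOn
      (fun q => (fderiv ℝ G q).comp (ContinuousLinearMap.inr ℝ P E)) Ω :=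
    hfc.clm_comp continuousOn_const
  obtain ⟨L₀, hL₀⟩ := hKball.exists_bound_of_continuousOn (hfc'.mono hsub)
  obtain ⟨C₀, hC₀⟩ := hKball.exists_bound_of_continuousOn ((hG.continuousOn).mono hsub)
  refine ⟨Real.toNNReal L₀, max C₀ 0, le_max_right _ _, fun p hp => ⟨?_, fun x hx => ?_⟩⟩
  · refine (convex_closedBall x₀ ρ).lipschitzOnWith_of_nnnorm_hasFDerivWithin_le
      (f' := fun x => (fderiv ℝ G (p, x)).comp (ContinuousLinearMap.inr ℝ P E))
      (fun x hx => ?_) (fun x hx => ?_)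
    · have hmem : (p, x) ∈ Ω := hsub ⟨hp, hx⟩
      have h1 : HasFDerivAt (fun y : E => (p, y)) (ContinuousLinearMap.inr ℝ P E) x :=
        hasFDerivAt_prodMk_right p x
      exact ((hd _ hmem).hasFDerivAt.comp x h1).hasFDerivWithinAt
    · have hmem : (p, x) ∈ K ×ˢ closedBall x₀ ρ := ⟨hp, hx⟩
      have h2 := hL₀ _ hmem
      rw [← norm_toNNReal]
      exact Real.toNNReal_mono h2
  · exact le_max_of_le_left (hC₀ _ ⟨hp, hx⟩)

/-- Picard–Lindelöf with the extra information that the solution stays in the ball. -/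
lemma exists_solution_mem {E : Type*} [NormedAddCommGroup E] [NormedSpace ℝ E]
    [CompleteSpace E] {v : ℝ → E → E} {tMin tMax : ℝ} {t₀ : Icc tMin tMax} {x₀ : E}
    {R C L : NNReal}
    (hpl : IsPicardLindelof v t₀ x₀ R 0 C L) :
    ∃ f : ℝ → E, f t₀ = x₀ ∧ ∀ t ∈ Icc tMin tMax,
      HasDerivWithinAt f (v t (f t)) (Icc tMin tMax) t ∧ f t ∈ closedBall x₀ R := by
  obtain ⟨α, hα⟩ := ODE.FunSpace.exists_isFixedPt_next hpl (mem_closedBall_self le_rfl)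
  refine ⟨α.compProj, by rw [ODE.FunSpace.compProj_val, ← hα, ODE.FunSpace.next_apply₀],
    fun t ht ↦ ⟨?_, α.compProj_mem_closedBall hpl.mul_max_le⟩⟩
  apply ODE.hasDerivWithinAt_picard_Icc t₀.2 hpl.continuousOn_uncurry
    α.continuous_compProj.continuousOn (fun _ ht' ↦ α.compProj_mem_closedBall hpl.mul_max_le)
    x₀ ht |>.congr_of_mem _ ht
  intro t' ht'
  nth_rw 1 [← hα]
  rw [ODE.FunSpace.compProj_of_mem ht', ODE.FunSpace.next_apply]

end analysis

lemma ode_form {x y z : Fin d → ℂ} (h : Complex.I • y = z + Complex.I • x) :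
    y = (-Complex.I) • z + x := by
  have h2 := congrArg (fun v : Fin d → ℂ => (-Complex.I) • v) h
  simpa [smul_smul, smul_add, neg_mul, Complex.I_mul_I, neg_neg, one_smul] using h2

end GPaux


open GPaux Set Metric


/-- Geometric principle (Theorem 3): existence of a maximal-type time `T' > 0`
and unique continuous imaginary potentials `w_m` such that the solution of the
geometrically modified Schrödinger equation satisfies the prescribed constraints,
with the Gram matrix staying invertible and the `w_m` determined by the linear
system `2 Σ_n S^{ψ(t)}_{mn} w_n(t) = o_m'(t) − ⟨ψ(t), i[H(t),O_m] ψ(t)⟩`. -/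
theorem geometric_principle_existence_uniqueness {d M : ℕ} (T : ℝ) (hT : 0 < T)
    (O : Fin M → Matrix (Fin d) (Fin d) ℂ) (hO : ∀ m, (O m).IsHermitian)
    (H : ℝ → Matrix (Fin d) (Fin d) ℂ) (hHc : Continuous H)
    (hH : ∀ t, (H t).IsHermitian)
    (o o' : Fin M → ℝ → ℝ) (ho : ∀ m t, HasDerivAt (o m) (o' m t) t)
    (ho' : ∀ m, Continuous (o' m))
    (ψ₀ : Fin d → ℂ) (hψ₀ : star ψ₀ ⬝ᵥ ψ₀ = 1)
    (hinit : ∀ m, star ψ₀ ⬝ᵥ ((O m) *ᵥ ψ₀) = (o m 0 : ℂ))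
    (hspan : (1 : Matrix (Fin d) (Fin d) ℂ) ∈ Submodule.span ℝ (Set.range O))
    (hS0 : IsUnit (Matrix.of fun m n : Fin M =>
      (star ((O m) *ᵥ ψ₀) ⬝ᵥ ((O n) *ᵥ ψ₀)).re)) :
    ∃ T' : ℝ, 0 < T' ∧ T' ≤ T ∧
    ∃ (w : Fin M → ℝ → ℝ) (ψ ψ' : ℝ → Fin d → ℂ),
      (∀ m, ContinuousOn (w m) (Set.Ico 0 T')) ∧ ψ 0 = ψ₀ ∧
      (∀ t ∈ Set.Ico 0 T',
        HasDerivAt ψ (ψ' t) t ∧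
        Complex.I • ψ' t =
          (H t) *ᵥ ψ t + Complex.I • ∑ m, (w m t : ℂ) • ((O m) *ᵥ ψ t) ∧
        (∀ m, star (ψ t) ⬝ᵥ ((O m) *ᵥ ψ t) = (o m t : ℂ)) ∧
        IsUnit (Matrix.of fun m n : Fin M =>
          (star ((O m) *ᵥ ψ t) ⬝ᵥ ((O n) *ᵥ ψ t)).re) ∧
        (∀ m, 2 * ∑ n, (star ((O m) *ᵥ ψ t) ⬝ᵥ ((O n) *ᵥ ψ t)).re * w n t =
          o' m t -
            (star (ψ t) ⬝ᵥ ((Complex.I • (H t * O m - O m * H t)) *ᵥ ψ t)).re)) ∧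
      (∀ (w2 : Fin M → ℝ → ℝ) (ψ2 ψ2' : ℝ → Fin d → ℂ),
        (∀ m, ContinuousOn (w2 m) (Set.Ico 0 T')) → ψ2 0 = ψ₀ →
        (∀ t ∈ Set.Ico 0 T',
          HasDerivAt ψ2 (ψ2' t) t ∧
          Complex.I • ψ2' t =
            (H t) *ᵥ ψ2 t + Complex.I • ∑ m, (w2 m t : ℂ) • ((O m) *ᵥ ψ2 t) ∧
          (∀ m, star (ψ2 t) ⬝ᵥ ((O m) *ᵥ ψ2 t) = (o m t : ℂ))) →
        ∀ t ∈ Set.Ico 0 T', (∀ m, w2 m t = w m t) ∧ ψ2 t = ψ t) := by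
  classical
  -- the time-dependent data as a continuous curve
  set u : ℝ → (Fin d → Fin d → ℂ) × (Fin M → ℝ) :=
    fun t => (fun i j => H t i j, fun m => o' m t) with hu_def
  have hu : Continuous u := by
    refine Continuous.prodMk ?_ ?_
    · exact continuous_pi fun i => continuous_pi fun j =>
        (continuous_apply j).comp ((continuous_apply i).comp hHc)
    · exact continuous_pi fun m => ho' m
  have hHof : ∀ t, Matrix.of (u t).1 = H t := fun t => rfl
  -- invertibility near ψ₀
  have hdet0 : IsUnit (gram O ψ₀) := hS0
  obtain ⟨ρ, hρpos, hρball⟩ :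
      ∃ ρ > 0, ∀ x ∈ closedBall ψ₀ ρ, IsUnit (gram O x) := by
    have hcont : Continuous fun x : Fin d → ℂ => (gram O x).det :=
      (contDiff_det (fun i j => contDiff_gram_entry O i j)).continuous
    have hUopen : IsOpen {x : Fin d → ℂ | (gram O x).det ≠ 0} :=
      (isOpen_compl_singleton).preimage hcont
    have hmem0 : ψ₀ ∈ {x : Fin d → ℂ | (gram O x).det ≠ 0} :=
      isUnit_iff_ne_zero.mp ((Matrix.isUnit_iff_isUnit_det _).mp hdet0)
    obtain ⟨ε, hεpos, hεsub⟩ := Metric.isOpen_iff.mp hUopen ψ₀ hmem0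
    refine ⟨ε/2, by positivity, fun x hx => ?_⟩
    have hx' : x ∈ Metric.ball ψ₀ ε := closedBall_subset_ball (by linarith) hx
    exact (Matrix.isUnit_iff_isUnit_det _).mpr (isUnit_iff_ne_zero.mpr (hεsub hx'))
  set K : Set ((Fin d → Fin d → ℂ) × (Fin M → ℝ)) := u '' Set.Icc (-1) 1 with hK_def
  have hK : IsCompact K := (isCompact_Icc).image hu
  have hsubΩ : K ×ˢ closedBall ψ₀ ρ ⊆ Om O := by
    rintro ⟨p, x⟩ ⟨-, hx⟩
    exact (Matrix.isUnit_iff_isUnit_det _).mp (hρball x hx)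
  obtain ⟨L, C, hC0, hLC⟩ := slice_lipschitz_bound (isOpen_Om O)
    ((contDiffOn_fld O).of_le (mod_cast le_top)) hK hsubΩ
  set a : ℝ := min 1 (min T (ρ/2 / (C+1))) with ha_def
  have haT : a ≤ T := le_trans (min_le_right _ _) (min_le_left _ _)
  have ha1 : a ≤ 1 := min_le_left _ _
  have hapos : 0 < a := by
    refine lt_min one_pos (lt_min hT ?_)
    positivity
  have haC : C * a ≤ ρ/2 := by
    have h1 : a ≤ ρ/2 / (C+1) := le_trans (min_le_right _ _) (min_le_right _ _)
    calc C * a ≤ C * (ρ/2 / (C+1)) := mul_le_mul_of_nonneg_left h1 hC0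
      _ = (ρ/2) * (C/(C+1)) := by ring
      _ ≤ (ρ/2) * 1 := by
          refine mul_le_mul_of_nonneg_left ?_ (by positivity)
          exact div_le_one_of_le₀ (by linarith) (by positivity)
      _ = ρ/2 := mul_one _
  -- the vector field
  set v : ℝ → (Fin d → ℂ) → (Fin d → ℂ) := fun t x => fld O (u t, x) with hv_def
  have hmemK : ∀ t ∈ Set.Icc (-a) a, u t ∈ K := by
    intro t ht
    exact ⟨t, ⟨le_trans (neg_le_neg ha1) ht.1, le_trans ht.2 ha1⟩, rfl⟩
  have hpl : IsPicardLindelof v (tmin := -a) (tmax := a)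
      ⟨0, ⟨neg_nonpos.mpr hapos.le, hapos.le⟩⟩ ψ₀ ⟨ρ/2, by positivity⟩ 0 ⟨C, hC0⟩ L := by
    refine ⟨fun t ht => ?_, fun x hx => ?_, fun t ht x hx => ?_, ?_⟩
    · exact ((hLC (u t) (hmemK t ht)).1).mono
        (closedBall_subset_closedBall (by show ρ/2 ≤ ρ; linarith))
    · refine ((contDiffOn_fld O).continuousOn).comp
        ((hu.prodMk continuous_const).continuousOn) ?_
      intro t ht
      exact (Matrix.isUnit_iff_isUnit_det _).mp
        (hρball x (closedBall_subset_closedBall (by show ρ/2 ≤ ρ; linarith) hx))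
    · exact (hLC (u t) (hmemK t ht)).2 x
        (closedBall_subset_closedBall (by show ρ/2 ≤ ρ; linarith) hx)
    · have : max (a - 0) (0 - (-a)) = a := by
        rw [sub_zero, zero_sub, neg_neg, max_self]
      show C * max (a - 0) (0 - (-a)) ≤ ρ/2 - ((0:NNReal):ℝ)
      rw [this, NNReal.coe_zero, sub_zero]
      exact haC
  obtain ⟨ψ, hψ0', hψsol⟩ := exists_solution_mem hpl
  have hψ0 : ψ 0 = ψ₀ := hψ0'
  have hmem : ∀ t ∈ Set.Icc (-a) a, ψ t ∈ closedBall ψ₀ (ρ/2) := fun t ht => (hψsol t ht).2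
  have hIcosub : Set.Ico (0:ℝ) a ⊆ Set.Icc (-a) a := fun t ht =>
    ⟨le_trans (neg_nonpos_of_nonneg hapos.le) ht.1, ht.2.le⟩
  have hIoosub : Set.Ico (0:ℝ) a ⊆ Set.Ioo (-a) a := fun t ht =>
    ⟨lt_of_lt_of_le (neg_lt_zero.mpr hapos) ht.1, ht.2⟩
  have hDel : ∀ t ∈ Set.Ioo (-a) a, HasDerivAt ψ (v t (ψ t)) t := by
    intro t ht
    exact ((hψsol t (Set.Ioo_subset_Icc_self ht)).1).hasDerivAt (Icc_mem_nhds ht.1 ht.2)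
  -- membership gives invertibility
  have hunit : ∀ t ∈ Set.Icc (-a) a, IsUnit (gram O (ψ t)) := fun t ht =>
    hρball _ (closedBall_subset_closedBall (by linarith) (hmem t ht))
  -- the potentials
  set w : Fin M → ℝ → ℝ := fun m t => wf O (u t, ψ t) m with hw_def
  -- derivative of the constraint for any curve solving the ODE with coefficients c
  have hconstr_deriv : ∀ (φ φd : ℝ → Fin d → ℂ) (c : Fin M → ℝ) (t : ℝ) (m : Fin M),
      HasDerivAt φ (φd t) t →
      φd t = (-Complex.I) • (H t *ᵥ φ t) + ∑ n, (c n : ℂ) • (O n *ᵥ φ t) →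
      HasDerivAt (fun s => star (φ s) ⬝ᵥ (O m *ᵥ φ s))
        (((star (φ t) ⬝ᵥ ((Complex.I • (H t * O m - O m * H t)) *ᵥ φ t)).re
          + 2 * ∑ n, (star (O m *ᵥ φ t) ⬝ᵥ (O n *ᵥ φ t)).re * c n : ℝ) : ℂ) t := by
    intro φ φd c t m hD hform
    have h1 := hasDerivAt_constraint (O m) hD
    rw [hform] at h1
    rw [constraint_deriv_eq O (hH t) hO (φ t) c m] at h1
    exact h1
  -- our solution satisfies the ODE with coefficients w
  have hψform : ∀ t ∈ Set.Ioo (-a) a,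
      v t (ψ t) = (-Complex.I) • (H t *ᵥ ψ t) + ∑ n, (w n t : ℂ) • (O n *ᵥ ψ t) := by
    intro t ht
    rfl
  -- the linear system (by construction)
  have hsys : ∀ t ∈ Set.Icc (-a) a, ∀ m,
      2 * ∑ n, (star (O m *ᵥ ψ t) ⬝ᵥ (O n *ᵥ ψ t)).re * w n t =
        o' m t - (star (ψ t) ⬝ᵥ ((Complex.I • (H t * O m - O m * H t)) *ᵥ ψ t)).re := by
    intro t ht m
    exact gram_wf O (u t, ψ t) (hunit t ht) m
  -- the constraints hold along the solution
  have hoC : ∀ (m : Fin M) (t : ℝ),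
      HasDerivAt (fun r => ((o m r : ℝ) : ℂ)) ((o' m t : ℝ) : ℂ) t := by
    intro m t
    exact (ho m t).ofReal_comp
  have hcons : ∀ t ∈ Set.Ico 0 a, ∀ m, star (ψ t) ⬝ᵥ (O m *ᵥ ψ t) = (o m t : ℂ) := by
    intro t ht m
    set g : ℝ → ℂ := fun s => star (ψ s) ⬝ᵥ (O m *ᵥ ψ s) - (o m s : ℂ) with hg_def
    have hg0 : g 0 = 0 := by simp [hg_def, hψ0, hinit m]
    have hgder : ∀ s ∈ Set.Ioo (-a) a, HasDerivAt g 0 s := by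
      intro s hs
      have h1 := hconstr_deriv ψ (fun r => v r (ψ r)) (fun n => w n s) s m (hDel s hs)
        (hψform s hs)
      have h2 : (star (ψ s) ⬝ᵥ ((Complex.I • (H s * O m - O m * H s)) *ᵥ ψ s)).re
          + 2 * ∑ n, (star (O m *ᵥ ψ s) ⬝ᵥ (O n *ᵥ ψ s)).re * w n s = o' m s := by
        have := hsys s (Set.Ioo_subset_Icc_self hs) m
        linarith
      rw [h2] at h1
      have h3 := h1.sub (hoC m s)
      rw [sub_self] at h3
      exact h3
    rcases eq_or_lt_of_le ht.1 with h0|h0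
    · subst h0
      exact sub_eq_zero.mp hg0
    · have hsubt : Set.Icc (0:ℝ) t ⊆ Set.Ioo (-a) a := fun s hs =>
        ⟨lt_of_lt_of_le (neg_lt_zero.mpr hapos) hs.1, lt_of_le_of_lt hs.2 ht.2⟩
      have hG := constant_of_has_deriv_right_zero (f := g) (a := 0) (b := t)
        (fun s hs => ((hgder s (hsubt hs)).continuousAt).continuousWithinAt)
        (fun s hs => (hgder s (hsubt (Set.Ico_subset_Icc_self hs))).hasDerivWithinAt)
      have := hG t (Set.right_mem_Icc.mpr h0.le)
      rw [hg0] at this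
      exact sub_eq_zero.mp this
  refine ⟨a, hapos, haT, w, ψ, fun t => v t (ψ t), ?_, hψ0, fun t ht => ⟨?_, ?_, hcons t ht, ?_, hsys t (hIcosub ht)⟩, ?_⟩
  · -- continuity of w
    intro m
    have hψcont : ContinuousOn ψ (Set.Ico 0 a) := fun s hs =>
      (hDel s (hIoosub hs)).continuousAt.continuousWithinAt
    refine ((contDiffOn_wf O m).continuousOn).comp
      ((hu.continuousOn).prodMk hψcont) ?_
    intro s hs
    exact (Matrix.isUnit_iff_isUnit_det _).mp (hunit s (hIcosub hs))
  · exact hDel t (hIoosub ht)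
  · -- the ODE in the stated form
    show Complex.I • v t (ψ t) = _
    rw [hψform t (hIoosub ht), smul_add, smul_smul, mul_neg, Complex.I_mul_I, neg_neg, one_smul]
  · exact hunit t (hIcosub ht)
  · -- uniqueness
    intro w2 ψ2 ψ2' hw2c hψ20 hsol2
    -- pointwise determination of the potentials
    have hstar : ∀ t ∈ Set.Ico (0:ℝ) a, ψ2 t ∈ closedBall ψ₀ ρ →
        (fun n => w2 n t) = wf O (u t, ψ2 t) := by
      intro t ht hball
      have hunit2 : IsUnit (gram O (ψ2 t)) := hρball _ hball
      obtain ⟨hD2, hODE2, hcons2⟩ := hsol2 t ht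
      have hform2 : ψ2' t = (-Complex.I) • (H t *ᵥ ψ2 t)
          + ∑ n, ((w2 n t : ℝ) : ℂ) • (O n *ᵥ ψ2 t) := ode_form hODE2
      have hsys2 : ∀ m, 2 * ∑ n, (star (O m *ᵥ ψ2 t) ⬝ᵥ (O n *ᵥ ψ2 t)).re * w2 n t
          = o' m t - (star (ψ2 t) ⬝ᵥ ((Complex.I • (H t * O m - O m * H t)) *ᵥ ψ2 t)).re := by
        intro m
        have h1 := (hconstr_deriv ψ2 ψ2' (fun n => w2 n t) t m hD2 hform2).hasDerivWithinAt
          (s := Set.Ici t)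
        have h4 := (hoC m t).hasDerivWithinAt (s := Set.Ici t)
        have hmemIco : Set.Ico t a ∈ nhdsWithin t (Set.Ici t) :=
          Ico_mem_nhdsGE_of_mem ⟨le_rfl, ht.2⟩
        have heq : (fun r => ((o m r : ℝ) : ℂ)) =ᶠ[nhdsWithin t (Set.Ici t)]
            (fun r => star (ψ2 r) ⬝ᵥ (O m *ᵥ ψ2 r)) := by
          filter_upwards [hmemIco] with r hr
          exact ((hsol2 r ⟨le_trans ht.1 hr.1, hr.2⟩).2.2 m).symm
        have h5 := h1.congr_of_eventuallyEq heq (hcons2 m).symm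
        have hud : UniqueDiffWithinAt ℝ (Set.Ici t) t := uniqueDiffOn_Ici t t Set.self_mem_Ici
        have h6 := h5.derivWithin hud
        rw [h4.derivWithin hud] at h6
        have h7 := Complex.ofReal_inj.mp h6
        linarith
      have hdet2 : IsUnit (gram O (ψ2 t)).det := (Matrix.isUnit_iff_isUnit_det _).mp hunit2
      have hvec : gram O (ψ2 t) *ᵥ (fun n => w2 n t)
          = (2:ℝ)⁻¹ • ((u t).2 - fun m => bev O (u t).1 (ψ2 t) m) := by
        funext m
        show ∑ n, gram O (ψ2 t) m n * w2 n t
          = ((2:ℝ)⁻¹ • ((u t).2 - fun m => bev O (u t).1 (ψ2 t) m)) m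
        simp only [Pi.smul_apply, Pi.sub_apply, smul_eq_mul]
        have this' : 2 * ∑ n, gram O (ψ2 t) m n * w2 n t
            = (u t).2 m - bev O (u t).1 (ψ2 t) m := hsys2 m
        linarith
      calc (fun n => w2 n t)
          = (gram O (ψ2 t))⁻¹ *ᵥ (gram O (ψ2 t) *ᵥ fun n => w2 n t) := by
            rw [Matrix.mulVec_mulVec, Matrix.nonsing_inv_mul _ hdet2, Matrix.one_mulVec]
        _ = wf O (u t, ψ2 t) := by rw [hvec, Matrix.mulVec_smul]; rfl
    -- hence ψ2 satisfies our ODE wherever it is in the ball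
    have hODEform : ∀ t ∈ Set.Ico (0:ℝ) a, ψ2 t ∈ closedBall ψ₀ ρ → ψ2' t = v t (ψ2 t) := by
      intro t ht hball
      obtain ⟨hD2, hODE2, hcons2⟩ := hsol2 t ht
      have hform2 := ode_form hODE2
      rw [hform2]
      show _ = fld O (u t, ψ2 t)
      unfold fld
      congr 1
      refine Finset.sum_congr rfl fun n _ => ?_
      rw [← congrFun (hstar t ht hball) n]
    -- the set where the solutions disagree is empty
    have hempty : ∀ t ∈ Set.Ico (0:ℝ) a, ψ2 t = ψ t := by
      by_contra hne'
      push_neg at hne'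
      set Bad : Set ℝ := {t | t ∈ Set.Ico (0:ℝ) a ∧ ψ2 t ≠ ψ t} with hBad_def
      have hne : Bad.Nonempty := by
        obtain ⟨t, ht, hnet⟩ := hne'
        exact ⟨t, ht, hnet⟩
      have hbdd : BddBelow Bad := ⟨0, fun b hb => hb.1.1⟩
      set τ := sInf Bad with hτ_def
      have hτ0 : 0 ≤ τ := le_csInf hne fun b hb => hb.1.1
      obtain ⟨b₀, hb₀⟩ := hne
      have hτlt : τ < a := lt_of_le_of_lt (csInf_le hbdd hb₀) hb₀.1.2
      have hτIco : τ ∈ Set.Ico (0:ℝ) a := ⟨hτ0, hτlt⟩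
      have heqbelow : ∀ s, 0 ≤ s → s < τ → ψ2 s = ψ s := by
        intro s h0 hs
        by_contra hne2
        exact absurd (csInf_le hbdd ⟨⟨h0, lt_trans hs hτlt⟩, hne2⟩) (not_le.mpr hs)
      have heqτ : ψ2 τ = ψ τ := by
        rcases eq_or_lt_of_le hτ0 with h0|h0
        · rw [← h0, hψ20, hψ0]
        · have hc2 : Filter.Tendsto ψ2 (nhdsWithin τ (Set.Iio τ)) (nhds (ψ2 τ)) :=
            ((hsol2 τ hτIco).1.continuousAt.tendsto).mono_left nhdsWithin_le_nhds
          have hc1 : Filter.Tendsto ψ (nhdsWithin τ (Set.Iio τ)) (nhds (ψ τ)) :=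
            ((hDel τ (hIoosub hτIco)).continuousAt.tendsto).mono_left nhdsWithin_le_nhds
          refine tendsto_nhds_unique_of_eventuallyEq hc2 hc1 ?_
          filter_upwards [Ioo_mem_nhdsLT_of_mem (Set.mem_Ioc.mpr ⟨h0, le_rfl⟩)] with s hs
          exact heqbelow s hs.1.le hs.2
      have hmemτ : ψ2 τ ∈ closedBall ψ₀ (ρ/2) := heqτ ▸ hmem τ (hIcosub hτIco)
      obtain ⟨ε, hεpos, hεball⟩ : ∃ ε > 0, ∀ s, dist s τ < ε → dist (ψ2 s) (ψ2 τ) < ρ/2 := by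
        have hcψ2 : ContinuousAt ψ2 τ := (hsol2 τ hτIco).1.continuousAt
        have := Metric.continuousAt_iff.mp hcψ2 (ρ/2) (by positivity)
        obtain ⟨δ, hδpos, hδ⟩ := this
        exact ⟨δ, hδpos, fun s hd => hδ hd⟩
      set τ' := min (τ + ε/2) ((τ + a)/2) with hτ'_def
      have hττ' : τ < τ' := lt_min (by linarith) (by linarith)
      have hτ'a : τ' < a := lt_of_le_of_lt (min_le_right _ _) (by linarith)
      have hsub01 : Set.Icc τ τ' ⊆ Set.Ico 0 a := fun s hs =>
        ⟨le_trans hτ0 hs.1, lt_of_le_of_lt hs.2 hτ'a⟩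
      have hball2 : ∀ s ∈ Set.Icc τ τ', ψ2 s ∈ closedBall ψ₀ ρ := by
        intro s hs
        have hd1 : dist (ψ2 s) (ψ2 τ) < ρ/2 := by
          refine hεball s ?_
          rw [Real.dist_eq, _root_.abs_of_nonneg (show (0:ℝ) ≤ s - τ by linarith [hs.1])]
          have h2 : τ' - τ ≤ ε/2 := by
            have := min_le_left (τ + ε/2) ((τ + a)/2)
            simp only [hτ'_def] at *
            linarith [hs.2]
          linarith [hs.2, hεpos]
        have hd2 : dist (ψ2 τ) ψ₀ ≤ ρ/2 := mem_closedBall.mp hmemτ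
        exact mem_closedBall.mpr (le_trans (dist_triangle _ (ψ2 τ) _) (by linarith))
      set S : ℝ → Set (Fin d → ℂ) :=
        fun t => if t ∈ Set.Icc (-1:ℝ) 1 then closedBall ψ₀ ρ else ∅ with hS_def
      have hlip : ∀ t, LipschitzOnWith L (v t) (S t) := by
        intro t
        by_cases htt : t ∈ Set.Icc (-1:ℝ) 1
        · have hSt : S t = closedBall ψ₀ ρ := if_pos htt
          rw [hSt]
          exact (hLC (u t) ⟨t, htt, rfl⟩).1
        · have hSt : S t = ∅ := if_neg htt
          rw [hSt]
          exact lipschitzOnWith_empty L (v t)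
      have hIcc01 : ∀ s ∈ Set.Icc τ τ', s ∈ Set.Icc (-1:ℝ) 1 := fun s hs =>
        Set.mem_Icc.mpr ⟨by linarith [le_trans hτ0 hs.1],
          by linarith [lt_of_le_of_lt hs.2 hτ'a, ha1]⟩
      have hEq : Set.EqOn ψ2 ψ (Set.Icc τ τ') := by
        refine ODE_solution_unique_of_mem_Icc_right (fun t _ => hlip t)
          (fun s hs => ((hsol2 s (hsub01 hs)).1.continuousAt).continuousWithinAt)
          (fun s hs => ?_) (fun s hs => ?_)
          (fun s hs => ((hDel s (hIoosub (hsub01 hs))).continuousAt).continuousWithinAt)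
          (fun s hs => ((hDel s (hIoosub (hsub01 (Set.Ico_subset_Icc_self hs)))).hasDerivWithinAt))
          (fun s hs => ?_) heqτ
        · have hs' := Set.Ico_subset_Icc_self hs
          have hD := (hsol2 s (hsub01 hs')).1
          rw [hODEform s (hsub01 hs') (hball2 s hs')] at hD
          exact hD.hasDerivWithinAt
        · have hs' := Set.Ico_subset_Icc_self hs
          rw [show S s = closedBall ψ₀ ρ from if_pos (hIcc01 s hs')]
          exact hball2 s hs'
        · have hs' := Set.Ico_subset_Icc_self hs
          rw [show S s = closedBall ψ₀ ρ from if_pos (hIcc01 s hs')]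
          exact closedBall_subset_closedBall (by linarith) (hmem s (hIcosub (hsub01 hs')))
      obtain ⟨b, hbBad, hbτ'⟩ := exists_lt_of_csInf_lt ⟨b₀, hb₀⟩ (show sInf Bad < τ' from hττ')
      have hbτ : τ ≤ b := csInf_le hbdd hbBad
      exact hbBad.2 (hEq ⟨hbτ, hbτ'.le⟩)
    intro t ht
    have heqt : ψ2 t = ψ t := hempty t ht
    refine ⟨fun m => ?_, heqt⟩
    have hball : ψ2 t ∈ closedBall ψ₀ ρ := by
      rw [heqt]
      exact closedBall_subset_closedBall (by linarith) (hmem t (hIcosub ht))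
    have := congrFun (hstar t ht hball) m
    rw [heqt] at this
    exact this

end
end
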